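/- arXiv:1906.08159 — 2 statements merged into one kernel-verified Lean document; each statement's English description precedes it below -/
import Mathlib

section
/- Let λ : ℕ → ℝ satisfy λ_k ≥ 1 for all k, let T > 0, and let r ∈ ℂ with Re r ≠ 0. Let (γ_k)_{k∈ℕ} be a complex sequence with Σ_k λ_k² |γ_k|² < ∞, and define ξ_k := (r − i λ_k) γ_k / (e^{(r − i λ_k)T} − 1). Then Σ_k |ξ_k|² ≤ ((1 + |r|)² / |e^{(Re r)·T} − 1|²) · Σ_k λ_k² |γ_k|². In particular, for every μ in H² there is a (unique) initial state ξ ∈ H whose weighted time-average recovers μ, and the inverse map M₀⁻¹ : H² → H is continuous. -/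
/-!
Each coefficient is bounded separately. The numerator satisfies
`|r - iλ_k| ≤ |r| + λ_k ≤ (1 + |r|) λ_k` because `λ_k ≥ 1`, and the denominator stays away from
zero uniformly in `k`: by the reverse triangle inequality,
`|e^{(r - iλ_k)T} - 1| ≥ |e^{(Re r)T} - 1| > 0`, since `|e^{(r - iλ_k)T}| = e^{(Re r)T}`.
Summing the resulting termwise bound gives the estimate.
-/

open Complex

lemma abs_exp_re_sub_one_le_norm_exp_sub_one (w : ℂ) :
    |Real.exp w.re - 1| ≤ ‖exp w - 1‖ := by
  simpa [norm_exp] using abs_norm_sub_norm_le (exp w) 1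

lemma norm_sub_I_mul_le_of_one_le (z : ℂ) {x : ℝ} (hx : 1 ≤ x) :
    ‖z - I * x‖ ≤ (1 + ‖z‖) * x := by
  have hIx : ‖I * (x : ℂ)‖ = x := by simp [abs_of_pos (zero_lt_one.trans_le hx)]
  calc ‖z - I * x‖ ≤ ‖z‖ + ‖I * (x : ℂ)‖ := norm_sub_le _ _
    _ = ‖z‖ + x := by rw [hIx]
    _ ≤ (1 + ‖z‖) * x := by nlinarith [norm_nonneg z]

lemma norm_mul_div_sq_le {a b c : ℂ} {A d x : ℝ} (ha : ‖a‖ ≤ A * x) (hd : 0 < d)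
    (hb : d ≤ ‖b‖) : ‖a * c / b‖ ^ 2 ≤ A ^ 2 / d ^ 2 * (x ^ 2 * ‖c‖ ^ 2) := by
  have ha' : ‖a‖ ^ 2 ≤ A ^ 2 * x ^ 2 := by
    rw [← mul_pow]; exact pow_le_pow_left₀ (norm_nonneg a) ha 2
  rw [norm_div, norm_mul, div_pow, mul_pow, div_mul_eq_mul_div, ← mul_assoc]
  exact div_le_div₀ (by positivity) (mul_le_mul_of_nonneg_right ha' (by positivity))
    (by positivity) (pow_le_pow_left₀ hd.le hb 2)

lemma summable_and_tsum_le_mul_tsum {f g : ℕ → ℝ} {C : ℝ} (hf : ∀ k, 0 ≤ f k)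
    (hfg : ∀ k, f k ≤ C * g k) (hg : Summable g) :
    Summable f ∧ ∑' k, f k ≤ C * ∑' k, g k := by
  have hf_sum : Summable f := .of_nonneg_of_le hf hfg (hg.mul_left C)
  exact ⟨hf_sum, tsum_mul_left (f := g) ▸ hf_sum.tsum_le_tsum hfg (hg.mul_left C)⟩

/-- inverse continuity estimate of Lemma 2.  With
`ξ_k = (r - iλ_k) γ_k / (e^{(r - iλ_k)T} - 1)`, one has
`Σ |ξ_k|² ≤ ((1 + |r|)² / |e^{(Re r)T} - 1|²) Σ λ_k² |γ_k|²`. -/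
theorem stmt_9 (lam : ℕ → ℝ) (hlam : ∀ k, 1 ≤ lam k) (T : ℝ) (hT : 0 < T)
    (r : ℂ) (hr : r.re ≠ 0) (γ : ℕ → ℂ)
    (hγ : Summable (fun k => (lam k) ^ 2 * ‖γ k‖ ^ 2)) :
    Summable (fun k =>
      ‖(r - Complex.I * lam k) * γ k / (Complex.exp ((r - Complex.I * lam k) * T) - 1)‖ ^ 2) ∧
    ∑' k, ‖(r - Complex.I * lam k) * γ k /
        (Complex.exp ((r - Complex.I * lam k) * T) - 1)‖ ^ 2 ≤
      ((1 + ‖r‖) ^ 2 / |Real.exp (r.re * T) - 1| ^ 2) *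
        ∑' k, (lam k) ^ 2 * ‖γ k‖ ^ 2 := by
  have hgap : 0 < |Real.exp (r.re * T) - 1| :=
    abs_pos.2 <| sub_ne_zero.2 <| Real.exp_eq_one_iff _ |>.not.2 (mul_ne_zero hr hT.ne')
  refine summable_and_tsum_le_mul_tsum (fun k => by positivity) (fun k => ?_) hγ
  refine norm_mul_div_sq_le (norm_sub_I_mul_le_of_one_le r (hlam k)) hgap ?_
  simpa using abs_exp_re_sub_one_le_norm_exp_sub_one ((r - I * lam k) * T)
end

section
/- Let H be a complex separable Hilbert space with Hilbert basis (v_k)_{k∈ℕ}, let λ : ℕ → ℝ, and let ξ ∈ H with coefficients ξ_k := ⟨v_k, ξ⟩ satisfy Σ_k λ_k² |ξ_k|² < ∞. Define u(t) := Σ_k e^{−i λ_k t} ξ_k v_k and w(s) := Σ_k λ_k e^{−i λ_k s} ξ_k v_k (both series converging in H). Then for every t ≥ 0, u(t) = ξ − i ∫₀ᵗ w(s) ds (Bochner integral in H); that is, u solves the Schrödinger equation (1/i) du/dt = A u with u(0) = ξ, where A is the diagonal operator A v_k = −λ_k v_k. -/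
/-!
Everything is diagonal in the basis: the `k`-th coefficient of `u t` is `e^{-iλ_k t} ξ_k`, and
that of `ξ - i ∫₀ᵗ w` is `ξ_k - i ∫₀ᵗ λ_k e^{-iλ_k s} ξ_k ds`; these agree by the scalar
fundamental theorem of calculus. Taking coefficients under the integral needs `w` to be
integrable: it is a pointwise limit of continuous partial sums, and by Parseval `‖w s‖` does not
depend on `s`.
-/

open MeasureTheory Complex

section HilbertBasis

variable {ι 𝕜 E : Type*} [RCLike 𝕜] [NormedAddCommGroup E] [InnerProductSpace 𝕜 E]
  (b : HilbertBasis ι 𝕜 E)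

theorem HilbertBasis.repr_apply_of_hasSum {a : ι → 𝕜} {x : E}
    (h : HasSum (fun j => a j • b j) x) (i : ι) : b.repr x i = a i := by
  classical
  have hinner : HasSum (fun j => a j * inner 𝕜 (b i) (b j)) (inner 𝕜 (b i) x) := by
    simpa only [innerSL_apply_apply, inner_smul_right] using (innerSL 𝕜 (b i)).hasSum h
  have hsingle : HasSum (fun j => a j * inner 𝕜 (b i) (b j)) (a i) := by
    convert hasSum_single (f := fun j => a j * inner 𝕜 (b i) (b j)) i fun j hj => ?_ using 1
    · simp [b.orthonormal.1 i]
    · simp [orthonormal_iff_ite.mp b.orthonormal i j, Ne.symm hj]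
  rw [b.repr_apply_apply, hinner.unique hsingle]

theorem HilbertBasis.norm_eq_of_forall_norm_repr_eq {x y : E}
    (h : ∀ i, ‖b.repr x i‖ = ‖b.repr y i‖) : ‖x‖ = ‖y‖ := by
  have hp : 0 < (2 : ENNReal).toReal := by norm_num
  rw [← b.repr.norm_map x, ← b.repr.norm_map y, lp.norm_eq_tsum_rpow hp, lp.norm_eq_tsum_rpow hp]
  simp only [h]

theorem HilbertBasis.repr_intervalIntegral [NormedSpace ℝ E] [CompleteSpace E] {f : ℝ → E}
    {s t : ℝ} (hf : IntervalIntegrable f volume s t) (i : ι) :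
    b.repr (∫ r in s..t, f r) i = ∫ r in s..t, b.repr (f r) i := by
  simp only [b.repr_apply_apply]
  exact ((innerSL 𝕜 (b i)).intervalIntegral_comp_comm hf).symm

end HilbertBasis

theorem stronglyMeasurable_of_hasSum {α E : Type*} [MeasurableSpace α] [AddCommMonoid E]
    [TopologicalSpace E] [ContinuousAdd E] [TopologicalSpace.PseudoMetrizableSpace E]
    {f : ℕ → α → E} {g : α → E} (hf : ∀ k, StronglyMeasurable (f k))
    (h : ∀ x, HasSum (fun k => f k x) (g x)) : StronglyMeasurable g :=
  stronglyMeasurable_of_tendsto Filter.atTop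
    (fun n => Finset.stronglyMeasurable_sum (Finset.range n) fun k _ => hf k)
    (tendsto_pi_nhds.mpr fun x => by simpa only [Finset.sum_apply] using (h x).tendsto_sum_nat)

theorem cexp_neg_I_mul_eq_one_sub_I_mul_integral (l t : ℝ) :
    cexp (-(I * l * t)) = 1 - I * ∫ s in (0 : ℝ)..t, (l : ℂ) * cexp (-(I * l * s)) := by
  have hderiv : ∀ s : ℝ, HasDerivAt (fun r : ℝ => cexp (-(I * l * r)))
      (-I * ((l : ℂ) * cexp (-(I * l * s)))) s := by
    intro s
    have := (((hasDerivAt_id (s : ℂ)).const_mul (-(I * l))).cexp).comp_ofReal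
    convert this using 1
    · simp only [id, neg_mul]
    · simp only [id, neg_mul]
      ring
  have hftc := intervalIntegral.integral_eq_sub_of_hasDerivAt (a := 0) (b := t)
    (fun s _ => hderiv s) (by apply Continuous.intervalIntegrable; fun_prop)
  rw [intervalIntegral.integral_const_mul] at hftc
  simp only [ofReal_zero, mul_zero, neg_zero, exp_zero] at hftc
  linear_combination -hftc

theorem stmt_11_general {H : Type*} [NormedAddCommGroup H] [InnerProductSpace ℂ H] [CompleteSpace H]
    (b : HilbertBasis ℕ ℂ H) (lam : ℕ → ℝ) (ξ : H)
    (u w : ℝ → H)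
    (hu : ∀ t : ℝ,
      HasSum (fun k => (Complex.exp (-(Complex.I * lam k * t)) * b.repr ξ k) • b k) (u t))
    (hw : ∀ s : ℝ,
      HasSum (fun k =>
        ((lam k : ℂ) * Complex.exp (-(Complex.I * lam k * s)) * b.repr ξ k) • b k) (w s)) :
    ∀ t : ℝ, 0 ≤ t → u t = ξ - Complex.I • ∫ s in (0:ℝ)..t, w s := by
  intro t _
  have hw_repr (s : ℝ) := b.repr_apply_of_hasSum (hw s)
  have hw_norm (s : ℝ) : ‖w s‖ = ‖w 0‖ :=
    b.norm_eq_of_forall_norm_repr_eq fun k => by simp [hw_repr, norm_exp]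
  have hw_meas : StronglyMeasurable w :=
    stronglyMeasurable_of_hasSum (fun k => by apply Continuous.stronglyMeasurable; fun_prop) hw
  have hw_int : IntervalIntegrable w volume 0 t :=
    (intervalIntegrable_const (c := ‖w 0‖)).mono_fun' hw_meas.aestronglyMeasurable
      (Filter.Eventually.of_forall fun s => (hw_norm s).le)
  refine b.repr.injective (lp.ext (funext fun k => ?_))
  simp only [b.repr_apply_of_hasSum (hu t), map_sub, map_smul, lp.coeFn_sub, lp.coeFn_smul,
    Pi.sub_apply, Pi.smul_apply, smul_eq_mul, b.repr_intervalIntegral hw_int, hw_repr,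
    intervalIntegral.integral_mul_const, cexp_neg_I_mul_eq_one_sub_I_mul_integral (lam k) t]
  ring

/-- for `ξ ∈ H²` (i.e. `Σ_k λ_k² |ξ_k|² < ∞`), the eigenfunction expansion
`u(t) = Σ_k e^{-iλ_k t} ξ_k v_k` is an `H`-valued integral-form solution of the
Schrödinger equation: `u(t) = ξ - i ∫₀ᵗ w(s) ds` with `w(s) = Σ_k λ_k e^{-iλ_k s} ξ_k v_k`
(so that `w(s) = -A u(s)` for the diagonal operator `A v_k = -λ_k v_k`). -/
theorem stmt_11 {H : Type*} [NormedAddCommGroup H] [InnerProductSpace ℂ H] [CompleteSpace H]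
    (b : HilbertBasis ℕ ℂ H) (lam : ℕ → ℝ) (ξ : H)
    (hξ : Summable (fun k => lam k ^ 2 * ‖b.repr ξ k‖ ^ 2))
    (u w : ℝ → H)
    (hu : ∀ t : ℝ,
      HasSum (fun k => (Complex.exp (-(Complex.I * lam k * t)) * b.repr ξ k) • b k) (u t))
    (hw : ∀ s : ℝ,
      HasSum (fun k =>
        ((lam k : ℂ) * Complex.exp (-(Complex.I * lam k * s)) * b.repr ξ k) • b k) (w s)) :
    ∀ t : ℝ, 0 ≤ t → u t = ξ - Complex.I • ∫ s in (0:ℝ)..t, w s :=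
  stmt_11_general b lam ξ u w hu hw
end
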